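/- For ν > −1, real x ≥ 0 and integer p ≥ 1, the modified Bessel function of the first kind admits the expansion/approximation I_ν(x) ≈ Σ_{k=0}^p V(k, p, ν) (x/2)^{ν+2k} with V(k, p, ν) = Γ(p+k) p^{1−2k} / (Γ(k+1) Γ(p−k+1) Γ(ν+k+1)); in particular, as p → ∞ with fixed k, V(k, p, ν) → 1/(k! Γ(ν+k+1)), recovering the exact series of I_ν. -/

import Mathlib

open Real Filter

lemma gamma_add_nat_prod (x : ℝ) (hx : 0 < x) (n : ℕ) :
    Real.Gamma (x + n) = Real.Gamma x * ∏ i ∈ Finset.range n, (x + i) := by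
  induction n with
  | zero => simp
  | succ n ih =>
    have h1 : x + ((n : ℕ) + 1 : ℕ) = (x + n) + 1 := by push_cast; ring
    have h2 : x + (n : ℝ) ≠ 0 := by positivity
    rw [h1, Real.Gamma_add_one h2, ih, Finset.prod_range_succ]
    push_cast
    ring

lemma aux_factor_tendsto (c : ℝ) :
    Tendsto (fun p : ℕ => ((p : ℝ) + c) / p) atTop (nhds 1) := by
  have h : Tendsto (fun p : ℕ => 1 + c / (p : ℝ)) atTop (nhds 1) := by
    have := tendsto_const_nhds (x := (1 : ℝ)) (f := atTop (α := ℕ))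
    have h0 := tendsto_const_div_atTop_nhds_zero_nat c
    simpa using this.add h0
  refine h.congr' ?_
  filter_upwards [eventually_ge_atTop 1] with p hp
  have hp0 : (p : ℝ) ≠ 0 := by positivity
  field_simp

/-- The coefficients of the finite-sum Bessel approximation
`V(k, p, ν) = Γ(p+k) p^(1−2k) / (Γ(k+1) Γ(p−k+1) Γ(ν+k+1))` converge, as `p → ∞`
with `k` fixed, to `1 / (k! Γ(ν+k+1))`, the exact series coefficient of `I_ν`. -/
theorem bessel_approx_coeff_tendsto (ν : ℝ) (hν : -1 < ν) (k : ℕ) :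
    Tendsto
      (fun p : ℕ =>
        Real.Gamma ((p : ℝ) + k) * (p : ℝ) ^ ((1 : ℝ) - 2 * k) /
          (Real.Gamma ((k : ℝ) + 1) * Real.Gamma ((p : ℝ) - k + 1) *
            Real.Gamma (ν + k + 1)))
      atTop
      (nhds (1 / ((k.factorial : ℝ) * Real.Gamma (ν + k + 1)))) := by
  have hΓν : 0 < Real.Gamma (ν + k + 1) := by
    apply Real.Gamma_pos_of_pos
    have : (0 : ℝ) ≤ k := Nat.cast_nonneg k
    linarith
  have hfac : 0 < (k.factorial : ℝ) := by positivity
  have hc : (k.factorial : ℝ) * Real.Gamma (ν + k + 1) ≠ 0 := by positivity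
  -- limit of the auxiliary function
  have h1 : Tendsto (fun p : ℕ => ((p : ℝ) / ((p : ℝ) - k)) *
      ∏ i ∈ Finset.range (2 * k), (((p : ℝ) - k + i) / p)) atTop (nhds 1) := by
    have ha : Tendsto (fun p : ℕ => (p : ℝ) / ((p : ℝ) - k)) atTop (nhds 1) := by
      have := (aux_factor_tendsto (-(k : ℝ))).inv₀ one_ne_zero
      simp only [inv_one] at this
      refine this.congr' ?_
      filter_upwards [eventually_ge_atTop (k + 1)] with p hp
      have hpk : (0 : ℝ) < (p : ℝ) - k := by
        have : (k : ℝ) < p := by exact_mod_cast hp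
        linarith
      have hp0 : (0 : ℝ) < (p : ℝ) := by
        have : (0 : ℝ) ≤ k := Nat.cast_nonneg k
        linarith
      rw [← sub_eq_add_neg, inv_div]
    have hb : Tendsto (fun p : ℕ => ∏ i ∈ Finset.range (2 * k),
        (((p : ℝ) - k + i) / p)) atTop (nhds 1) := by
      have h := tendsto_finset_prod (Finset.range (2 * k))
        (fun i _ => aux_factor_tendsto ((i : ℝ) - (k : ℝ)))
      rw [Finset.prod_const_one] at h
      refine h.congr fun p => Finset.prod_congr rfl fun i _ => ?_
      ring
    simpa using ha.mul hb
  have h2 := (tendsto_const_nhds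
      (x := 1 / ((k.factorial : ℝ) * Real.Gamma (ν + k + 1))) (f := atTop (α := ℕ))).mul h1
  rw [mul_one] at h2
  refine h2.congr' ?_
  filter_upwards [eventually_ge_atTop (k + 1)] with p hp
  have hkp : (k : ℝ) < p := by exact_mod_cast hp
  have hpk : (0 : ℝ) < (p : ℝ) - k := by linarith
  have hp0 : (0 : ℝ) < (p : ℝ) := by
    have : (0 : ℝ) ≤ k := Nat.cast_nonneg k
    linarith
  have e1 : Real.Gamma ((p : ℝ) + k) =
      Real.Gamma ((p : ℝ) - k) * ∏ i ∈ Finset.range (2 * k), (((p : ℝ) - k) + i) := by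
    have h : (p : ℝ) + k = ((p : ℝ) - k) + (2 * k : ℕ) := by push_cast; ring
    rw [h, gamma_add_nat_prod _ hpk]
  have e2 : Real.Gamma ((p : ℝ) - k + 1) = ((p : ℝ) - k) * Real.Gamma ((p : ℝ) - k) :=
    Real.Gamma_add_one hpk.ne'
  have e3 : Real.Gamma ((k : ℝ) + 1) = (k.factorial : ℝ) := Real.Gamma_nat_eq_factorial k
  have e4 : (p : ℝ) ^ ((1 : ℝ) - 2 * k) = (p : ℝ) / (p : ℝ) ^ (2 * k : ℕ) := by
    rw [Real.rpow_sub hp0, Real.rpow_one,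
      show ((2 : ℝ) * k) = ((2 * k : ℕ) : ℝ) by push_cast; ring, Real.rpow_natCast]
  have e5 : ∏ i ∈ Finset.range (2 * k), (((p : ℝ) - k + i) / p) =
      (∏ i ∈ Finset.range (2 * k), (((p : ℝ) - k) + i)) / (p : ℝ) ^ (2 * k : ℕ) := by
    rw [Finset.prod_div_distrib, Finset.prod_const, Finset.card_range]
  have hΓpk : Real.Gamma ((p : ℝ) - k) ≠ 0 := (Real.Gamma_pos_of_pos hpk).ne'
  rw [e1, e2, e3, e4, e5]
  field_simp
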